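/- A non-scalar (n+1)×(n+1) matrix over F_q has at most q^n + q − 2 eigenvectors, and this maximum is attained exactly when the matrix is diagonalizable with exactly two eigenspaces, of dimensions n and 1. -/

import Mathlib

open Matrix

/-! The eigenvectors are the nonzero vectors of the eigenspaces, which are independent; so with
`g λ` the dimension of the eigenspace of `λ` there are `∑ λ, (q ^ g λ - 1)` of them, where
`g λ ≤ n` since `M` is not scalar, and `∑ λ, g λ ≤ n + 1`.

The map `x ↦ q ^ x - 1` is superadditive with defect `(q ^ a - 1) * (q ^ b - 1)`. Fix one
eigenvalue with `g = m ≥ 1`; the others, of total dimension `R`, contribute at most `q ^ R - 1`,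
and for `R ≥ 1`, `(q ^ m - 1) + (q ^ R - 1) ≤ (q ^ (m + R - 1) - 1) + (q - 1)` with defect
`q * (q ^ (m - 1) - 1) * (q ^ (R - 1) - 1)`. This gives the bound `(q ^ n - 1) + (q - 1)`, and
equality forces `m + R = n + 1`, one of `m`, `R` to be `1`, and the dimension `R` to sit on a
single eigenvalue. -/

open Finset Module Function

namespace Nat

variable {q : ℕ}

theorem pow_sub_one_add_pow_sub_one_add_mul (hq : 1 ≤ q) (a b : ℕ) :
    (q ^ a - 1) + (q ^ b - 1) + (q ^ a - 1) * (q ^ b - 1) = q ^ (a + b) - 1 := by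
  have ha := Nat.one_le_pow a q hq
  have hb := Nat.one_le_pow b q hq
  zify [ha, hb, Nat.one_le_pow (a + b) q hq]
  ring

theorem pow_succ_sub_one_add_pow_succ_sub_one_add_mul (hq : 1 ≤ q) (a b : ℕ) :
    (q ^ (a + 1) - 1) + (q ^ (b + 1) - 1) + q * ((q ^ a - 1) * (q ^ b - 1)) =
      (q ^ (a + b + 1) - 1) + (q - 1) := by
  have ha := Nat.one_le_pow a q hq
  have hb := Nat.one_le_pow b q hq
  zify [ha, hb, hq, Nat.one_le_pow (a + 1) q hq, Nat.one_le_pow (b + 1) q hq,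
    Nat.one_le_pow (a + b + 1) q hq]
  ring

theorem pow_sub_one_eq_zero_iff (hq : 2 ≤ q) {a : ℕ} : q ^ a - 1 = 0 ↔ a = 0 := by
  have := Nat.one_le_pow a q (by omega)
  rw [show q ^ a - 1 = 0 ↔ q ^ a = 1 by omega, Nat.pow_eq_one]
  omega

theorem pow_sub_one_le_pow_sub_one (hq : 1 ≤ q) {a b : ℕ} (hab : a ≤ b) :
    q ^ a - 1 ≤ q ^ b - 1 :=
  Nat.sub_le_sub_right (Nat.pow_le_pow_right hq hab) 1

variable {α : Type*}

theorem sum_pow_sub_one_le (hq : 1 ≤ q) (s : Finset α) (g : α → ℕ) :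
    ∑ c ∈ s, (q ^ g c - 1) ≤ q ^ (∑ c ∈ s, g c) - 1 := by
  induction s using Finset.cons_induction with
  | empty => simp
  | cons a s ha ih =>
    rw [sum_cons, sum_cons, ← pow_sub_one_add_pow_sub_one_add_mul hq]
    omega

variable {s : Finset α} {g : α → ℕ}

theorem exists_eq_sum_of_sum_pow_sub_one_eq (hq : 2 ≤ q)
    (hpos : 1 ≤ ∑ c ∈ s, g c) (h : ∑ c ∈ s, (q ^ g c - 1) = q ^ (∑ c ∈ s, g c) - 1) :
    ∃ b ∈ s, g b = ∑ c ∈ s, g c := by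
  induction s using Finset.cons_induction with
  | empty => simp at hpos
  | cons a s ha ih =>
    rw [sum_cons] at hpos ⊢
    rw [sum_cons, sum_cons, ← pow_sub_one_add_pow_sub_one_add_mul (by omega)] at h
    have hle := sum_pow_sub_one_le (q := q) (by omega) s g
    have hmul : (q ^ g a - 1) * (q ^ (∑ c ∈ s, g c) - 1) = 0 := by omega
    rcases mul_eq_zero.mp hmul with ha0 | hs0
    · rw [pow_sub_one_eq_zero_iff hq] at ha0
      obtain ⟨b, hb, hgb⟩ := ih (by omega) (by omega)
      exact ⟨b, mem_cons_of_mem hb, by omega⟩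
    · rw [pow_sub_one_eq_zero_iff hq] at hs0
      exact ⟨a, mem_cons_self a s, by omega⟩

theorem sum_pow_sub_one_le_of_mem (hq : 2 ≤ q) {n : ℕ} {a : α} (ha : a ∈ s) (hga : 1 ≤ g a)
    (hgan : g a ≤ n) (hsum : ∑ c ∈ s, g c ≤ n + 1) :
    ∑ c ∈ s, (q ^ g c - 1) ≤ (q ^ n - 1) + (q - 1) ∧
      (∑ c ∈ s, (q ^ g c - 1) = (q ^ n - 1) + (q - 1) →
        ∃ a ∈ s, ∃ b ∈ s, a ≠ b ∧ g a = n ∧ g b = 1) := by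
  classical
  rw [← add_sum_erase s _ ha] at hsum ⊢
  have hrest := sum_pow_sub_one_le (q := q) (by omega) (s.erase a) g
  set R := ∑ c ∈ s.erase a, g c
  rcases Nat.eq_zero_or_pos R with hR | hR
  · rw [hR, pow_zero, Nat.sub_self, Nat.le_zero] at hrest
    have := pow_sub_one_le_pow_sub_one (q := q) (by omega) hgan
    exact ⟨by omega, fun _ => by omega⟩
  obtain ⟨m, hm⟩ : ∃ m, g a = m + 1 := ⟨g a - 1, by omega⟩
  obtain ⟨r, hr⟩ : ∃ r, R = r + 1 := ⟨R - 1, by omega⟩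
  have hpair := pow_succ_sub_one_add_pow_succ_sub_one_add_mul (q := q) (by omega) m r
  have hmono := pow_sub_one_le_pow_sub_one (q := q) (by omega) (show m + r + 1 ≤ n by omega)
  rw [← hm, ← hr] at hpair
  refine ⟨by omega, fun heq => ?_⟩
  have hn : m + r + 1 = n := by
    apply Nat.pow_right_injective hq
    have := Nat.one_le_pow n q (by omega)
    have := Nat.one_le_pow (m + r + 1) q (by omega)
    show q ^ (m + r + 1) = q ^ n
    omega
  have hmr : m = 0 ∨ r = 0 := by
    have hprod : q * ((q ^ m - 1) * (q ^ r - 1)) = 0 := by omega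
    rwa [Nat.mul_eq_zero, or_iff_right (by omega), Nat.mul_eq_zero, pow_sub_one_eq_zero_iff hq,
      pow_sub_one_eq_zero_iff hq] at hprod
  obtain ⟨b, hb, hgb⟩ := exists_eq_sum_of_sum_pow_sub_one_eq hq (show 1 ≤ R by omega)
    (show ∑ c ∈ s.erase a, (q ^ g c - 1) = q ^ R - 1 by omega)
  have hba : b ≠ a := ne_of_mem_erase hb
  rcases hmr with hm0 | hr0
  · exact ⟨b, mem_of_mem_erase hb, a, ha, hba, by omega, by omega⟩
  · exact ⟨a, ha, b, mem_of_mem_erase hb, hba.symm, by omega, by omega⟩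

theorem sum_pow_sub_one_le_and_eq_iff (hq : 2 ≤ q) {n : ℕ} (hle : ∀ c ∈ s, g c ≤ n)
    (hsum : ∑ c ∈ s, g c ≤ n + 1) :
    ∑ c ∈ s, (q ^ g c - 1) ≤ q ^ n + q - 2 ∧
      (∑ c ∈ s, (q ^ g c - 1) = q ^ n + q - 2 ↔
        ∃ a ∈ s, ∃ b ∈ s, a ≠ b ∧ g a = n ∧ g b = 1) := by
  classical
  have hbound : q ^ n + q - 2 = (q ^ n - 1) + (q - 1) := by
    have := Nat.one_le_pow n q (by omega)
    omega
  have hwit : (∃ a ∈ s, ∃ b ∈ s, a ≠ b ∧ g a = n ∧ g b = 1) →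
      (q ^ n - 1) + (q - 1) ≤ ∑ c ∈ s, (q ^ g c - 1) := by
    rintro ⟨a, ha, b, hb, hab, rfl, hgb⟩
    calc (q ^ g a - 1) + (q - 1) = ∑ c ∈ {a, b}, (q ^ g c - 1) := by
          rw [sum_pair hab, hgb, pow_one]
      _ ≤ _ := sum_le_sum_of_subset (insert_subset ha (singleton_subset_iff.mpr hb))
  rw [hbound]
  by_cases hsupp : ∃ a ∈ s, g a ≠ 0
  · obtain ⟨a, ha, hga⟩ := hsupp
    obtain ⟨hle', heq⟩ := sum_pow_sub_one_le_of_mem hq ha (by omega) (hle a ha) hsum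
    exact ⟨hle', heq, fun h => le_antisymm hle' (hwit h)⟩
  · push Not at hsupp
    have hzero : ∑ c ∈ s, (q ^ g c - 1) = 0 := sum_eq_zero fun c hc => by simp [hsupp c hc]
    refine ⟨by omega, fun h => by omega, ?_⟩
    rintro ⟨-, -, b, hb, -, -, hgb⟩
    exact absurd (hsupp b hb) (by omega)

end Nat

theorem iSupIndep.sum_finrank_le {K V ι : Type*} [DivisionRing K] [AddCommGroup V] [Module K V]
    [FiniteDimensional K V] [Fintype ι] {p : ι → Submodule K V} (hp : iSupIndep p) :
    ∑ i, finrank K (p i) ≤ finrank K V := by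
  classical
  rw [← finrank_directSum]
  exact LinearMap.finrank_le_finrank_of_injective hp.dfinsupp_lsum_injective

namespace Module.End

variable {K V : Type*} [Field K] [AddCommGroup V] [Module K V]

theorem eigenspace_eq_top_iff {f : End K V} {c : K} : f.eigenspace c = ⊤ ↔ f = c • 1 := by
  simp [Submodule.eq_top_iff', LinearMap.ext_iff]

theorem finrank_eigenspace_lt [FiniteDimensional K V] {f : End K V} {c : K} (hf : f ≠ c • 1) :
    finrank K (f.eigenspace c) < finrank K V :=
  Submodule.finrank_lt (eigenspace_eq_top_iff.not.mpr hf)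

theorem ncard_eigenvectors [Fintype K] [FiniteDimensional K V] (f : End K V) :
    {v : V | v ≠ 0 ∧ ∃ c : K, f v = c • v}.ncard =
      ∑ c, (Fintype.card K ^ finrank K (f.eigenspace c) - 1) := by
  have : Finite V := Module.finite_of_finite K
  have hunion :
      {v : V | v ≠ 0 ∧ ∃ c : K, f v = c • v} = ⋃ c, (f.eigenspace c : Set V) \ {0} := by
    ext v
    simp [and_comm]
  have hdisj : Pairwise (Disjoint on fun c => (f.eigenspace c : Set V) \ {0}) := by
    intro c d hcd
    refine Set.disjoint_left.mpr fun v hc hd => hc.2 ?_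
    exact Submodule.disjoint_def.mp (f.eigenspaces_iSupIndep.pairwiseDisjoint hcd) v hc.1 hd.1
  rw [hunion, Set.ncard_iUnion_of_finite (fun _ => Set.toFinite _) hdisj,
    finsum_eq_sum_of_fintype]
  refine Finset.sum_congr rfl fun c _ => ?_
  rw [Set.ncard_sdiff_singleton_of_mem (f.eigenspace c).zero_mem, ← Nat.card_coe_set_eq,
    SetLike.coe_sort_coe, natCard_eq_pow_finrank (K := K), Nat.card_eq_fintype_card]

end Module.End

theorem Matrix.mulVecLin_transpose_eq_smul_one_iff {n R : Type*} [Fintype n] [DecidableEq n]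
    [CommRing R] (M : Matrix n n R) (c : R) : Mᵀ.mulVecLin = c • 1 ↔ M = c • 1 := by
  rw [← toLin'_apply', End.one_eq_id, ← toLin'_one, ← map_smul, toLin'.injective.eq_iff,
    ← transpose_inj, transpose_transpose, transpose_smul, transpose_one]

/-- A non-scalar `(n+1) × (n+1)` matrix over `F_q` has at most `q^n + q - 2` (left)
eigenvectors, with equality exactly when it is diagonalizable with two eigenspaces of
dimensions `n` and `1`. -/
theorem max_eigenvectors_nonscalar {n : ℕ} {F : Type*} [Field F] [Fintype F]
    (M : Matrix (Fin (n + 1)) (Fin (n + 1)) F)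
    (hM : ∀ c : F, M ≠ c • (1 : Matrix (Fin (n + 1)) (Fin (n + 1)) F)) :
    Set.ncard {ξ : Fin (n + 1) → F | ξ ≠ 0 ∧ ∃ c : F, Matrix.vecMul ξ M = c • ξ}
      ≤ (Fintype.card F) ^ n + Fintype.card F - 2 ∧
    (Set.ncard {ξ : Fin (n + 1) → F | ξ ≠ 0 ∧ ∃ c : F, Matrix.vecMul ξ M = c • ξ}
        = (Fintype.card F) ^ n + Fintype.card F - 2 ↔
      ∃ l₁ l₂ : F, l₁ ≠ l₂ ∧
        Module.finrank F (Module.End.eigenspace (Matrix.mulVecLin Mᵀ) l₁) = n ∧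
        Module.finrank F (Module.End.eigenspace (Matrix.mulVecLin Mᵀ) l₂) = 1) := by
  set f : End F (Fin (n + 1) → F) := Mᵀ.mulVecLin
  have hvecMul : ∀ ξ, vecMul ξ M = f ξ := fun ξ => (mulVec_transpose M ξ).symm
  have hle : ∀ c ∈ univ, finrank F (f.eigenspace c) ≤ n := fun c _ => by
    have := End.finrank_eigenspace_lt ((mulVecLin_transpose_eq_smul_one_iff M c).not.mpr (hM c))
    rwa [finrank_fin_fun, Nat.lt_succ_iff] at this
  have hsum : ∑ c, finrank F (f.eigenspace c) ≤ n + 1 :=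
    f.eigenspaces_iSupIndep.sum_finrank_le.trans_eq (finrank_fin_fun F)
  obtain ⟨hbound, hiff⟩ :=
    Nat.sum_pow_sub_one_le_and_eq_iff (Fintype.one_lt_card (α := F)) hle hsum
  simp only [hvecMul, f.ncard_eigenvectors]
  exact ⟨hbound, hiff.trans (by simp only [mem_univ, true_and])⟩
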